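/- arXiv:2512.17378 — 5 statements merged into one kernel-verified Lean document; each statement's English description precedes it below -/
import Mathlib

section
/- Let f = ⋀_{i=1}^l C_i be a 3CNF formula over variables A and let f' = ⋀_{i=1}^l (C_i ∧ (b_i ∨ b_i ∨ b_i)) for fresh distinct variables b_1,…,b_l. Then for every subformula of f' of the form g ∧ h (under any bracketing of the top-level conjunctions that keeps each C_i ∧ (b_i ∨ b_i ∨ b_i) intact), the formulas g and h are strongly independent. -/
/-- A literal is a variable or a negated variable. -/
inductive Lit : Type where
  | pos : ℕ → Lit
  | neg : ℕ → Lit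

/-- The variable of a literal. -/
def Lit.var : Lit → ℕ
  | .pos n => n
  | .neg n => n

/-- A 3-clause is a disjunction of three literals. -/
abbrev Clause := Lit × Lit × Lit

/-- The variables of a clause. -/
def Clause.vars (c : Clause) : List ℕ := [c.1.var, c.2.1.var, c.2.2.var]

/-- Satisfaction of a literal by a Boolean assignment. -/
def Lit.sat (A : ℕ → Bool) : Lit → Prop
  | .pos n => A n = true
  | .neg n => A n = false

/-- Satisfaction of a clause: some literal is satisfied. -/
def Clause.sat (A : ℕ → Bool) (c : Clause) : Prop :=
  c.1.sat A ∨ c.2.1.sat A ∨ c.2.2.sat A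

/-- A CNF formula is a list of clauses; satisfaction means all clauses are satisfied. -/
abbrev CNF := List Clause

def CNF.sat (A : ℕ → Bool) (f : CNF) : Prop := ∀ c ∈ f, c.sat A

/-- A bracketed CNF formula: a binary tree of conjunctions with clauses at leaves. -/
inductive CT : Type where
  | leaf : Clause → CT
  | and : CT → CT → CT

/-- The clauses of a bracketed CNF formula. -/
def CT.clauses : CT → List Clause
  | .leaf c => [c]
  | .and g h => g.clauses ++ h.clauses

/-- The variables of a bracketed CNF formula. -/
def CT.vars (t : CT) : List ℕ := t.clauses.flatMap Clause.vars

/-- `g` is independent from `h`: some clause of `g` has all its variables absent from `h`. -/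
def Indep (g h : CT) : Prop := ∃ c ∈ g.clauses, ∀ v ∈ c.vars, v ∉ h.vars

/-- `g` and `h` are strongly independent. -/
def StrongIndep (g h : CT) : Prop := Indep g h ∧ Indep h g

/-- The subformula relation on bracketed CNF formulas. -/
inductive Subf : CT → CT → Prop
  | refl (t : CT) : Subf t t
  | left {s g h : CT} : Subf s g → Subf s (.and g h)
  | right {s g h : CT} : Subf s h → Subf s (.and g h)

/-- Valid bracketings of f' = ⋀_i (C_i ∧ (b_i ∨ b_i ∨ b_i)): each block
C_i ∧ (b_i ∨ b_i ∨ b_i) is kept intact, and distinct blocks use distinct indices. -/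
inductive Brack (C : ℕ → Clause) (b : ℕ → ℕ) : CT → Finset ℕ → Prop
  | block (i : ℕ) :
      Brack C b (.and (.leaf (C i)) (.leaf (.pos (b i), .pos (b i), .pos (b i)))) {i}
  | and {t₁ t₂ : CT} {s₁ s₂ : Finset ℕ} :
      Brack C b t₁ s₁ → Brack C b t₂ s₂ → Disjoint s₁ s₂ → Brack C b (.and t₁ t₂) (s₁ ∪ s₂)

lemma brack_vars {C : ℕ → Clause} {b : ℕ → ℕ} {t : CT} {s : Finset ℕ}
    (ht : Brack C b t s) :
    ∀ v ∈ t.vars, (∃ j ∈ s, v ∈ (C j).vars) ∨ (∃ j ∈ s, v = b j) := by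
  induction ht with
  | block i =>
    intro v hv
    simp only [CT.vars, CT.clauses, List.cons_append, List.nil_append,
      List.flatMap_cons, List.flatMap_nil, List.append_nil, List.mem_append] at hv
    rcases hv with hv | hv
    · exact Or.inl ⟨i, by simp, hv⟩
    · right
      refine ⟨i, by simp, ?_⟩
      simpa [Clause.vars, Lit.var] using hv
  | and h1 h2 _ ih1 ih2 =>
    intro v hv
    simp only [CT.vars, CT.clauses, List.flatMap_append, List.mem_append] at hv
    rcases hv with hv | hv
    · rcases ih1 v hv with ⟨j, hj, h⟩ | ⟨j, hj, h⟩
      · exact Or.inl ⟨j, Finset.mem_union_left _ hj, h⟩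
      · exact Or.inr ⟨j, Finset.mem_union_left _ hj, h⟩
    · rcases ih2 v hv with ⟨j, hj, h⟩ | ⟨j, hj, h⟩
      · exact Or.inl ⟨j, Finset.mem_union_right _ hj, h⟩
      · exact Or.inr ⟨j, Finset.mem_union_right _ hj, h⟩

lemma brack_bclause {C : ℕ → Clause} {b : ℕ → ℕ} {t : CT} {s : Finset ℕ}
    (ht : Brack C b t s) :
    ∃ i ∈ s, (Lit.pos (b i), Lit.pos (b i), Lit.pos (b i)) ∈ t.clauses := by
  induction ht with
  | block i => exact ⟨i, by simp, by simp [CT.clauses]⟩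
  | and h1 h2 _ ih1 ih2 =>
    obtain ⟨i, hi, hc⟩ := ih1
    exact ⟨i, Finset.mem_union_left _ hi, by simp [CT.clauses, hc]⟩

lemma brack_indep {C : ℕ → Clause} {b : ℕ → ℕ} {t₁ t₂ : CT} {s₁ s₂ : Finset ℕ}
    (hb : Function.Injective b) (hfresh : ∀ i j : ℕ, b i ∉ (C j).vars)
    (h1 : Brack C b t₁ s₁) (h2 : Brack C b t₂ s₂) (hd : Disjoint s₁ s₂) :
    Indep t₁ t₂ := by
  obtain ⟨i, hi, hc⟩ := brack_bclause h1
  refine ⟨_, hc, ?_⟩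
  intro v hv hmem
  simp [Clause.vars, Lit.var] at hv
  subst hv
  rcases brack_vars h2 _ hmem with ⟨j, hj, h⟩ | ⟨j, hj, h⟩
  · exact hfresh i j h
  · have : i = j := hb h
    subst this
    exact (Finset.disjoint_left.mp hd hi) hj

/-- in any bracketing of f' keeping each C_i ∧ (b_i ∨ b_i ∨ b_i) intact,
every conjunctive subformula g ∧ h has g and h strongly independent. -/
theorem brack_strong_indep (C : ℕ → Clause) (b : ℕ → ℕ)
    (hb : Function.Injective b) (hfresh : ∀ i j : ℕ, b i ∉ (C j).vars)
    (t : CT) (s : Finset ℕ) (ht : Brack C b t s)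
    (g h : CT) (hsub : Subf (.and g h) t) :
    StrongIndep g h := by
  induction ht with
  | block i =>
    rcases hsub with _ | hs | hs
    · constructor
      · refine ⟨C i, by simp [CT.clauses], ?_⟩
        intro v hv hmem
        have : v = b i := by
          simpa [CT.vars, CT.clauses, Clause.vars, Lit.var] using hmem
        subst this
        exact hfresh i i hv
      · refine ⟨(Lit.pos (b i), Lit.pos (b i), Lit.pos (b i)),
          by simp [CT.clauses], ?_⟩
        intro v hv hmem
        have : v = b i := by simpa [Clause.vars, Lit.var] using hv
        subst this
        have : b i ∈ (C i).vars := by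
          simpa [CT.vars, CT.clauses] using hmem
        exact hfresh i i this
    · cases hs
    · cases hs
  | and h1 h2 hd ih1 ih2 =>
    rcases hsub with _ | hs | hs
    · exact ⟨brack_indep hb hfresh h1 h2 hd,
        brack_indep hb hfresh h2 h1 hd.symm⟩
    · exact ih1 hs
    · exact ih2 hs
end

section
/- Let M be an S5 Kripke structure with two relations R_1, R_2 (each an equivalence relation), and let φ_a := (□_1 a) ⊕ (□_2 □_1 a) for a proposition a, φ_{¬a} := (□_1 ¬a) ⊕ (□_2 □_1 ¬a). If some world w' in the R_1-equivalence class W of a world w satisfies φ_a, then every world of W satisfies a; and if some world of W satisfies φ_{¬a}, then every world of W satisfies ¬a. Consequently, φ_a and φ_{¬a} cannot both be satisfied at worlds of the same R_1-equivalence class. -/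
/-- Affine multi-modal formulas: ⊤, ⊥, propositions, exclusive-or, and diamonds ◇_i. -/
inductive MF : Type where
  | top : MF
  | bot : MF
  | prop : ℕ → MF
  | xor : MF → MF → MF
  | dia : ℕ → MF → MF

/-- The derived box operator: □_i φ := (◇_i (φ ⊕ ⊤)) ⊕ ⊤. -/
def MF.box (i : ℕ) (φ : MF) : MF := .xor (.dia i (.xor φ .top)) .top

/-- Satisfaction in a Kripke structure given relations `R` and labeling `ξ`. -/
def Sat {W : Type _} (R : ℕ → W → W → Prop) (ξ : ℕ → W → Prop) : MF → W → Prop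
  | .top, _ => True
  | .bot, _ => False
  | .prop p, w => ξ p w
  | .xor φ ψ, w => Xor' (Sat R ξ φ w) (Sat R ξ ψ w)
  | .dia i φ, w => ∃ w', R i w w' ∧ Sat R ξ φ w'

lemma box_sat {W : Type _} (R : ℕ → W → W → Prop) (ξ : ℕ → W → Prop) (i : ℕ) (φ : MF)
    (w : W) : Sat R ξ (MF.box i φ) w ↔ ∀ w', R i w w' → Sat R ξ φ w' := by
  simp [MF.box, Sat, Xor', Xor]

lemma phi_sat {W : Type _} (R : ℕ → W → W → Prop) (ξ : ℕ → W → Prop)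
    (hS5 : ∀ i, Equivalence (R i)) (φ : MF) (w : W)
    (h : Sat R ξ (.xor (MF.box 1 φ) (MF.box 2 (MF.box 1 φ))) w) :
    ∀ w', R 1 w w' → Sat R ξ φ w' := by
  have h' : Xor' (Sat R ξ (MF.box 1 φ) w) (Sat R ξ (MF.box 2 (MF.box 1 φ)) w) := h
  rcases h' with ⟨h1, _⟩ | ⟨h2, h1⟩
  · exact (box_sat R ξ 1 φ w).1 h1
  · exact absurd ((box_sat R ξ 2 _ w).1 h2 w ((hS5 2).refl w)) h1

/-- in an S5 structure, if some world of the R_1-class of w satisfies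
φ_a = (□_1 a) ⊕ (□_2 □_1 a) then every world of the class satisfies a; dually for
φ_{¬a}; hence φ_a and φ_{¬a} cannot both be satisfied within the same R_1-class. -/
theorem phi_literal_forces_class {W : Type _} (R : ℕ → W → W → Prop) (ξ : ℕ → W → Prop)
    (hS5 : ∀ i, Equivalence (R i)) (a : ℕ) (w : W) :
    ((∃ w', R 1 w w' ∧
        Sat R ξ (.xor (MF.box 1 (.prop a)) (MF.box 2 (MF.box 1 (.prop a)))) w') →
      ∀ w', R 1 w w' → ξ a w') ∧
    ((∃ w', R 1 w w' ∧
        Sat R ξ (.xor (MF.box 1 (.xor (.prop a) .top))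
          (MF.box 2 (MF.box 1 (.xor (.prop a) .top)))) w') →
      ∀ w', R 1 w w' → ¬ ξ a w') ∧
    ¬ ((∃ w', R 1 w w' ∧
          Sat R ξ (.xor (MF.box 1 (.prop a)) (MF.box 2 (MF.box 1 (.prop a)))) w') ∧
        (∃ w', R 1 w w' ∧
          Sat R ξ (.xor (MF.box 1 (.xor (.prop a) .top))
            (MF.box 2 (MF.box 1 (.xor (.prop a) .top)))) w')) := by
  have haux : ∀ w', R 1 w w' → ∀ w'', R 1 w' w'' → R 1 w w'' := fun w' h1 w'' h2 =>
    (hS5 1).trans h1 h2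
  have hA : (∃ w', R 1 w w' ∧
        Sat R ξ (.xor (MF.box 1 (.prop a)) (MF.box 2 (MF.box 1 (.prop a)))) w') →
      ∀ w', R 1 w w' → ξ a w' := by
    rintro ⟨u, hu, hs⟩ w' hw'
    exact phi_sat R ξ hS5 _ u hs w' ((hS5 1).trans ((hS5 1).symm hu) hw')
  have hB : (∃ w', R 1 w w' ∧
        Sat R ξ (.xor (MF.box 1 (.xor (.prop a) .top))
          (MF.box 2 (MF.box 1 (.xor (.prop a) .top)))) w') →
      ∀ w', R 1 w w' → ¬ ξ a w' := by
    rintro ⟨u, hu, hs⟩ w' hw'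
    have := phi_sat R ξ hS5 _ u hs w' ((hS5 1).trans ((hS5 1).symm hu) hw')
    simpa [Sat, Xor', Xor] using this
  refine ⟨hA, hB, fun ⟨h1, h2⟩ => ?_⟩
  exact hB h2 w ((hS5 1).refl w) (hA h1 w ((hS5 1).refl w))
end

section
/- Let M be an S5 Kripke structure with relations R_1, R_2 and let C = l_1 ∨ l_2 ∨ l_3 be a 3-clause with translation φ_C := ◇_1(φ_{l_1} ⊕ φ_{l_2} ⊕ φ_{l_3}), where φ_a = (□_1 a) ⊕ (□_2□_1 a) and φ_{¬a} = (□_1 ¬a) ⊕ (□_2□_1 ¬a). If M,w ⊨ φ_C and A = {a : M,w ⊨ a}, then the assignment A satisfies the clause C. -/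
/-- Satisfaction of a literal by an assignment (a set of true variables). -/
def Lit.satP (A : ℕ → Prop) : Lit → Prop
  | .pos n => A n
  | .neg n => ¬ A n

/-- Satisfaction of a clause by an assignment. -/
def Clause.satP (A : ℕ → Prop) (c : Clause) : Prop :=
  c.1.satP A ∨ c.2.1.satP A ∨ c.2.2.satP A

/-- Negation-free rendering of a literal: ¬a is a ⊕ ⊤. -/
def Lit.mf : Lit → MF
  | .pos n => .prop n
  | .neg n => .xor (.prop n) .top

/-- Translation of a literal l: φ_l = (□_1 l) ⊕ (□_2 □_1 l). -/
def phiLit (l : Lit) : MF := .xor (MF.box 1 l.mf) (MF.box 2 (MF.box 1 l.mf))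

/-- Translation of a clause: φ_C = ◇_1(φ_{l_1} ⊕ φ_{l_2} ⊕ φ_{l_3}). -/
def phiClause (c : Clause) : MF :=
  .dia 1 (.xor (.xor (phiLit c.1) (phiLit c.2.1)) (phiLit c.2.2))


lemma sat_box_iff {W : Type _} (R : ℕ → W → W → Prop) (ξ : ℕ → W → Prop)
    (i : ℕ) (φ : MF) (v : W) :
    Sat R ξ (MF.box i φ) v ↔ ∀ u, R i v u → Sat R ξ φ u := by
  simp only [MF.box, Sat, Xor', Xor]
  push_neg
  aesop

lemma phiLit_force {W : Type _} (R : ℕ → W → W → Prop) (ξ : ℕ → W → Prop)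
    (hS5 : ∀ i, Equivalence (R i)) (l : Lit) {w w' : W} (hR : R 1 w w')
    (h : Sat R ξ (phiLit l) w') : l.satP (fun a => ξ a w) := by
  have hbox : Sat R ξ (MF.box 1 l.mf) w' := by
    rcases h with ⟨h1, _⟩ | ⟨h2, h1⟩
    · exact h1
    · exact absurd ((sat_box_iff R ξ 2 _ w').mp h2 w' ((hS5 2).refl w')) h1
  have := (sat_box_iff R ξ 1 _ w').mp hbox w ((hS5 1).symm hR)
  cases l with
  | pos n => exact this
  | neg n =>
    rcases this with ⟨_, _⟩ | ⟨_, hn⟩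
    · simp_all [Sat]
    · exact hn

/-- in an S5 structure, if w satisfies φ_C = ◇_1(φ_{l_1} ⊕ φ_{l_2} ⊕ φ_{l_3}),
then the assignment A = {a : M,w ⊨ a} satisfies the clause C. -/
theorem phi_clause_sound {W : Type _} (R : ℕ → W → W → Prop) (ξ : ℕ → W → Prop)
    (hS5 : ∀ i, Equivalence (R i)) (C : Clause) (w : W)
    (h : Sat R ξ (phiClause C) w) :
    C.satP (fun a => ξ a w) := by
  obtain ⟨w', hR, hx⟩ := h
  have : Sat R ξ (phiLit C.1) w' ∨ Sat R ξ (phiLit C.2.1) w' ∨ Sat R ξ (phiLit C.2.2) w' := by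
    rcases hx with ⟨⟨h,_⟩|⟨h,_⟩, _⟩ | ⟨h, _⟩ <;> tauto
  rcases this with h | h | h
  · exact Or.inl (phiLit_force R ξ hS5 _ hR h)
  · exact Or.inr (Or.inl (phiLit_force R ξ hS5 _ hR h))
  · exact Or.inr (Or.inr (phiLit_force R ξ hS5 _ hR h))
end

section
/- Define the translation φ from 3CNF formulas (with binary conjunction bracketing) to affine 2-modal formulas by: φ_a = (□_1 a) ⊕ (□_2□_1 a); φ_{¬a} = (□_1 ¬a) ⊕ (□_2□_1 ¬a); φ_{l_1∨l_2∨l_3} = ◇_1(φ_{l_1} ⊕ φ_{l_2} ⊕ φ_{l_3}); and φ_{g∧h} = ◇_1(ψ_g ⊕ ψ_h) ⊕ ◇_1 ψ_g ⊕ ◇_1 ψ_h where ψ_g = φ_g ⊕ □_2 φ_g and ψ_h = φ_h ⊕ □_2 φ_h. If the bracketing of the conjunction of l clauses is balanced (depth O(log l)), then the size of φ_f is polynomial in the size of f. -/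
/-- The affine 2-modal translation: φ_{g∧h} = ◇_1(ψ_g ⊕ ψ_h) ⊕ ◇_1 ψ_g ⊕ ◇_1 ψ_h,
where ψ_x = φ_x ⊕ □_2 φ_x. -/
def phiTree : CT → MF
  | .leaf c => phiClause c
  | .and g h =>
    let ψg := MF.xor (phiTree g) (MF.box 2 (phiTree g))
    let ψh := MF.xor (phiTree h) (MF.box 2 (phiTree h))
    .xor (.xor (.dia 1 (.xor ψg ψh)) (.dia 1 ψg)) (.dia 1 ψh)

/-- The size (number of symbols) of a modal formula. -/
def MF.size : MF → ℕ
  | .top => 1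
  | .bot => 1
  | .prop _ => 1
  | .xor φ ψ => φ.size + ψ.size + 1
  | .dia _ φ => φ.size + 1

/-- The size (number of symbols) of a bracketed CNF formula. -/
def CT.size : CT → ℕ
  | .leaf _ => 5
  | .and g h => g.size + h.size + 1

/-- The depth of a bracketed CNF formula. -/
def CT.depth : CT → ℕ
  | .leaf _ => 0
  | .and g h => max g.depth h.depth + 1

lemma phiLit_size (l : Lit) : (phiLit l).size ≤ 22 := by
  cases l <;> simp [phiLit, Lit.mf, MF.box, MF.size]

lemma phiClause_size (c : Clause) : (phiClause c).size ≤ 69 := by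
  have h1 := phiLit_size c.1
  have h2 := phiLit_size c.2.1
  have h3 := phiLit_size c.2.2
  have : (phiClause c).size
      = (phiLit c.1).size + (phiLit c.2.1).size + 1 + (phiLit c.2.2).size + 1 + 1 := rfl
  omega

lemma phiTree_size_le (t : CT) : (phiTree t).size ≤ 69 * 9 ^ t.depth := by
  induction t with
  | leaf c => simpa [phiTree, CT.depth] using phiClause_size c
  | and g h ihg ihh =>
    have hd : (phiTree (CT.and g h)).size
        = 4 * (phiTree g).size + 4 * (phiTree h).size + 30 := by
      simp [phiTree, MF.box, MF.size]; ring
    have hg9 : 9 ^ g.depth ≤ 9 ^ (max g.depth h.depth) :=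
      Nat.pow_le_pow_right (by norm_num) (le_max_left _ _)
    have hh9 : 9 ^ h.depth ≤ 9 ^ (max g.depth h.depth) :=
      Nat.pow_le_pow_right (by norm_num) (le_max_right _ _)
    have hone : 1 ≤ 9 ^ (max g.depth h.depth) := Nat.one_le_pow _ _ (by norm_num)
    have : (CT.and g h).depth = max g.depth h.depth + 1 := rfl
    rw [hd, this, pow_succ]
    omega

lemma ct_size_pos (t : CT) : 1 ≤ t.size := by
  induction t <;> simp [CT.size]

/-- for trees of logarithmic depth, the size of the translated formula
φ_f is polynomially bounded in the size of f. -/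
theorem phiTree_size_poly (k : ℕ) :
    ∃ c d : ℕ, ∀ t : CT,
      t.depth ≤ k * (Nat.log 2 t.size + 1) →
      (phiTree t).size ≤ c * (t.size + 1) ^ d := by
  refine ⟨69, 8 * k, fun t ht => ?_⟩
  have h1 := phiTree_size_le t
  have hs := ct_size_pos t
  set s := t.size with hsdef
  set L := Nat.log 2 s with hL
  have hlog : 2 ^ L ≤ s := Nat.pow_log_le_self 2 (by omega)
  have key : 9 ^ t.depth ≤ (s + 1) ^ (8 * k) := by
    calc 9 ^ t.depth ≤ 9 ^ (k * (L + 1)) :=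
          Nat.pow_le_pow_right (by norm_num) ht
      _ ≤ (2 ^ 4) ^ (k * (L + 1)) :=
          Nat.pow_le_pow_left (by norm_num) _
      _ = (2 ^ (L + 1)) ^ (4 * k) := by
          rw [← pow_mul, ← pow_mul]; ring_nf
      _ ≤ ((s + 1) ^ 2) ^ (4 * k) := by
          apply Nat.pow_le_pow_left
          have : 2 ^ (L + 1) = 2 * 2 ^ L := by ring
          nlinarith
      _ = (s + 1) ^ (8 * k) := by rw [← pow_mul]; ring_nf
  calc (phiTree t).size ≤ 69 * 9 ^ t.depth := h1
    _ ≤ 69 * (s + 1) ^ (8 * k) := Nat.mul_le_mul_left _ key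
end

section
/- Let M be an S5 Kripke structure, w a world, W the R_1-equivalence class of w, and g, h subformulas with translations φ_g, φ_h as in the affine translation, with ψ_g = φ_g ⊕ □_2 φ_g, ψ_h = φ_h ⊕ □_2 φ_h, and φ_{g∧h} = ◇_1(ψ_g ⊕ ψ_h) ⊕ ◇_1 ψ_g ⊕ ◇_1 ψ_h. If M,w ⊨ φ_{g∧h}, then there exist worlds w'', w''' ∈ W with M,w'' ⊨ φ_g and M,w''' ⊨ φ_h. -/
/-- If φ fails at v (and R_2 is reflexive), then ψ = φ ⊕ □_2 φ also fails at v. -/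
lemma psi_false {W : Type _} (R : ℕ → W → W → Prop) (ξ : ℕ → W → Prop)
    (v : W) (href : R 2 v v) (φ : MF) (hv : ¬ Sat R ξ φ v) :
    ¬ Sat R ξ (.xor φ (MF.box 2 φ)) v := by
  intro hx
  rcases hx with ⟨h1, _⟩ | ⟨h1, _⟩
  · exact hv h1
  · rcases h1 with ⟨_, ht⟩ | ⟨_, hd⟩
    · exact ht trivial
    · exact hd ⟨v, href, Or.inr ⟨trivial, hv⟩⟩

/-- in an S5 structure, if w satisfies
φ_{g∧h} = ◇_1(ψ_g ⊕ ψ_h) ⊕ ◇_1 ψ_g ⊕ ◇_1 ψ_h with ψ_x = φ_x ⊕ □_2 φ_x, then the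
R_1-class of w contains worlds satisfying φ_g and φ_h respectively. -/
theorem phi_and_witnesses {W : Type _} (R : ℕ → W → W → Prop) (ξ : ℕ → W → Prop)
    (hS5 : ∀ i, Equivalence (R i)) (φg φh : MF) (w : W)
    (h : Sat R ξ
      (.xor (.xor (.dia 1 (.xor (.xor φg (MF.box 2 φg)) (.xor φh (MF.box 2 φh))))
          (.dia 1 (.xor φg (MF.box 2 φg))))
        (.dia 1 (.xor φh (MF.box 2 φh)))) w) :
    (∃ w'', R 1 w w'' ∧ Sat R ξ φg w'') ∧ (∃ w''', R 1 w w''' ∧ Sat R ξ φh w''') := by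
  have href : ∀ v : W, R 2 v v := fun v => (hS5 2).refl v
  constructor
  · by_contra hg
    push_neg at hg
    -- ψ_g is false at every R_1-successor of w
    have hψg : ∀ v, R 1 w v → ¬ Sat R ξ (.xor φg (MF.box 2 φg)) v := fun v hv =>
      psi_false R ξ v (href v) φg (hg v hv)
    -- hence ◇_1 ψ_g is false
    have hB : ¬ Sat R ξ (.dia 1 (.xor φg (MF.box 2 φg))) w := by
      rintro ⟨v, hv, hsat⟩; exact hψg v hv hsat
    -- and ◇_1 (ψ_g ⊕ ψ_h) ↔ ◇_1 ψ_h
    have hAC : Sat R ξ (.dia 1 (.xor (.xor φg (MF.box 2 φg)) (.xor φh (MF.box 2 φh)))) w ↔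
        Sat R ξ (.dia 1 (.xor φh (MF.box 2 φh))) w := by
      constructor
      · rintro ⟨v, hv, (⟨h1, _⟩ | ⟨h1, _⟩)⟩
        · exact absurd h1 (hψg v hv)
        · exact ⟨v, hv, h1⟩
      · rintro ⟨v, hv, h1⟩
        exact ⟨v, hv, Or.inr ⟨h1, hψg v hv⟩⟩
    rcases h with ⟨(⟨hA, _⟩ | ⟨hB', _⟩), hC⟩ | ⟨hC, h1⟩
    · exact hC (hAC.mp hA)
    · exact hB hB'
    · exact h1 (Or.inl ⟨hAC.mpr hC, hB⟩)
  · by_contra hh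
    push_neg at hh
    have hψh : ∀ v, R 1 w v → ¬ Sat R ξ (.xor φh (MF.box 2 φh)) v := fun v hv =>
      psi_false R ξ v (href v) φh (hh v hv)
    have hC : ¬ Sat R ξ (.dia 1 (.xor φh (MF.box 2 φh))) w := by
      rintro ⟨v, hv, hsat⟩; exact hψh v hv hsat
    have hAB : Sat R ξ (.dia 1 (.xor (.xor φg (MF.box 2 φg)) (.xor φh (MF.box 2 φh)))) w ↔
        Sat R ξ (.dia 1 (.xor φg (MF.box 2 φg))) w := by
      constructor
      · rintro ⟨v, hv, (⟨h1, _⟩ | ⟨h1, _⟩)⟩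
        · exact ⟨v, hv, h1⟩
        · exact absurd h1 (hψh v hv)
      · rintro ⟨v, hv, h1⟩
        exact ⟨v, hv, Or.inl ⟨h1, hψh v hv⟩⟩
    rcases h with ⟨(⟨hA, hB⟩ | ⟨hB, hA⟩), _⟩ | ⟨hC', _⟩
    · exact hB (hAB.mp hA)
    · exact hA (hAB.mpr hB)
    · exact hC hC'
end
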